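/- arXiv:1805.03437 — 2 statements merged into one kernel-verified Lean document; each statement's English description precedes it below -/
import Mathlib

section
/- Let m ≥ 2, let S be a minimum-makespan schedule of jobs with processing times p_1,…,p_n > 0 on machines M_1,…,M_m, and let J' be the set of jobs assigned by S to machine M_m (modeling failure of M_m). Then every schedule of all n jobs on the m−1 machines M_1,…,M_{m−1} that assigns each job not in J' to the same machine as S (and the jobs of J' arbitrarily among M_1,…,M_{m−1}) has makespan at most 2·C*_max(m−1, (p_1,…,p_n)). -/
open Finset

/-- Completion time (load) of machine `i` under schedule `σ` and processing times `p`. -/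
noncomputable def mLoad {n m : ℕ} (p : Fin n → ℝ) (σ : Fin n → Fin m) (i : Fin m) : ℝ :=
  ∑ j ∈ Finset.univ.filter (fun j => σ j = i), p j

/-- Makespan of schedule `σ`: the maximum machine completion time. -/
noncomputable def makespan {n m : ℕ} (p : Fin n → ℝ) (σ : Fin n → Fin m) : ℝ :=
  ⨆ i, mLoad p σ i

/-- Minimum makespan of the jobs with processing times `p` on `m` machines. -/
noncomputable def optMakespan {n : ℕ} (m : ℕ) (p : Fin n → ℝ) : ℝ :=
  ⨅ σ : Fin n → Fin m, makespan p σ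

lemma mLoad_nonneg {n m : ℕ} (p : Fin n → ℝ) (hp : ∀ j, 0 ≤ p j)
    (σ : Fin n → Fin m) (i : Fin m) : 0 ≤ mLoad p σ i :=
  Finset.sum_nonneg fun j _ => hp j

lemma le_makespan {n m : ℕ} (p : Fin n → ℝ) (σ : Fin n → Fin m) (i : Fin m) :
    mLoad p σ i ≤ makespan p σ :=
  le_ciSup (Set.Finite.bddAbove (Set.finite_range _)) i

lemma makespan_nonneg {n m : ℕ} [Nonempty (Fin m)] (p : Fin n → ℝ) (hp : ∀ j, 0 ≤ p j)
    (σ : Fin n → Fin m) : 0 ≤ makespan p σ := by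
  obtain ⟨i⟩ := ‹Nonempty (Fin m)›
  exact le_trans (mLoad_nonneg p hp σ i) (le_makespan p σ i)

lemma optMakespan_le {n m : ℕ} (p : Fin n → ℝ) (σ : Fin n → Fin m) :
    optMakespan m p ≤ makespan p σ :=
  ciInf_le (Set.Finite.bddBelow (Set.finite_range _)) σ

lemma optMakespan_succ_le {n m : ℕ} (hm : 1 ≤ m) (p : Fin n → ℝ) (hp : ∀ j, 0 ≤ p j) :
    optMakespan (m + 1) p ≤ optMakespan m p := by
  have : Nonempty (Fin m) := ⟨⟨0, hm⟩⟩
  refine le_ciInf fun σ => ?_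
  refine le_trans (optMakespan_le p (fun j => (σ j).castSucc)) ?_
  refine ciSup_le fun i => ?_
  rcases Fin.eq_castSucc_or_eq_last i with ⟨k, rfl⟩ | rfl
  · have : mLoad p (fun j => (σ j).castSucc) k.castSucc = mLoad p σ k := by
      unfold mLoad
      congr 1
      ext j
      simp [Fin.castSucc_inj]
    rw [this]
    exact le_makespan p σ k
  · have : mLoad p (fun j => (σ j).castSucc) (Fin.last m) = 0 := by
      unfold mLoad
      rw [Finset.sum_eq_zero]
      intro j hj
      simp only [Finset.mem_filter] at hj
      exact absurd hj.2 (Fin.castSucc_lt_last _).ne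
    rw [this]
    exact makespan_nonneg p hp σ

/-- after failure of the last of `m + 1` machines of a minimum-makespan
schedule, every schedule on the remaining `m` machines that keeps the assignment of the
surviving jobs (and reassigns the orphaned jobs arbitrarily) has makespan at most
`2·C*_max(m, p)`. -/
theorem stmt10 (n m : ℕ) (hm : 1 ≤ m) (p : Fin n → ℝ) (hp : ∀ j, 0 < p j)
    (σ : Fin n → Fin (m + 1)) (hσ : makespan p σ = optMakespan (m + 1) p)
    (τ : Fin n → Fin m)
    (hτ : ∀ j, ∀ h : σ j ≠ Fin.last m, τ j = (σ j).castPred h) :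
    makespan p τ ≤ 2 * optMakespan m p := by
  have hp' : ∀ j, 0 ≤ p j := fun j => (hp j).le
  have : Nonempty (Fin m) := ⟨⟨0, hm⟩⟩
  have key : ∀ i : Fin m, mLoad p τ i ≤ 2 * makespan p σ := by
    intro i
    have hsub : Finset.univ.filter (fun j => τ j = i) ⊆
        Finset.univ.filter (fun j => σ j = i.castSucc) ∪
        Finset.univ.filter (fun j => σ j = Fin.last m) := by
      intro j hj
      simp only [Finset.mem_filter, Finset.mem_union, Finset.mem_univ, true_and] at hj ⊢
      by_cases h : σ j = Fin.last m
      · exact Or.inr h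
      · left
        rw [← hj, hτ j h]
        simp
    have hdisj : Disjoint (Finset.univ.filter (fun j => σ j = i.castSucc))
        (Finset.univ.filter (fun j => σ j = Fin.last m)) := by
      rw [Finset.disjoint_left]
      intro j hj1 hj2
      simp only [Finset.mem_filter, Finset.mem_univ, true_and] at hj1 hj2
      exact absurd (hj1.symm.trans hj2) (Fin.castSucc_lt_last i).ne
    calc mLoad p τ i ≤ ∑ j ∈ Finset.univ.filter (fun j => σ j = i.castSucc) ∪
            Finset.univ.filter (fun j => σ j = Fin.last m), p j :=
          Finset.sum_le_sum_of_subset_of_nonneg hsub (fun j _ _ => hp' j)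
      _ = mLoad p σ i.castSucc + mLoad p σ (Fin.last m) := Finset.sum_union hdisj
      _ ≤ makespan p σ + makespan p σ := add_le_add (le_makespan p σ _) (le_makespan p σ _)
      _ = 2 * makespan p σ := by ring
  refine (ciSup_le key).trans ?_
  rw [hσ]
  have := optMakespan_succ_le hm p hp'
  linarith
end

section
/- Let S be a minimum-makespan schedule of jobs with processing times p_1,…,p_n > 0 on m identical machines. Let f ≥ 1 be a real and k ≥ 0 an integer, and let p̂ satisfy p̂_j ≥ p_j for every j (augmentations only) such that the number of jobs with p̂_j > f·p_j is at most k. Then the schedule that keeps exactly the same job-to-machine assignment as S has makespan, measured with processing times p̂, at most (f + k)·C*_max(m, p̂). -/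
open Finset

/-!
Split the load of a machine under `p̂` into its stable jobs (`p̂ⱼ ≤ f pⱼ`) and its unstable
ones. The stable part is at most `f` times the old load, which is at most
`C*_max(m, p) ≤ C*_max(m, p̂)`; each of the at most `k` unstable jobs is on its own at most
`C*_max(m, p̂)`, since every schedule puts it on some machine.
-/

theorem Finset.sum_le_mul_sum_add_card_filter_lt_mul {ι : Type*} {s : Finset ι} {p q : ι → ℝ}
    {f B : ℝ} (hf : 0 ≤ f) (hp : ∀ j ∈ s, 0 ≤ p j) (hqB : ∀ j ∈ s, q j ≤ B) :
    ∑ j ∈ s, q j ≤ f * ∑ j ∈ s, p j + #(s.filter fun j => f * p j < q j) * B := by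
  rw [← sum_filter_add_sum_filter_not s (fun j => f * p j < q j), add_comm]
  gcongr ?_ + ?_
  · calc ∑ j ∈ s.filter (fun j => ¬f * p j < q j), q j
        ≤ ∑ j ∈ s.filter (fun j => ¬f * p j < q j), f * p j :=
          sum_le_sum fun j hj => not_lt.mp (mem_filter.mp hj).2
      _ ≤ ∑ j ∈ s, f * p j :=
          sum_le_sum_of_subset_of_nonneg (filter_subset _ _)
            fun j hj _ => mul_nonneg hf (hp j hj)
      _ = f * ∑ j ∈ s, p j := (mul_sum s p f).symm
  · rw [← nsmul_eq_mul]
    exact sum_le_card_nsmul _ _ _ fun j hj => hqB j (mem_filter.mp hj).1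

section Makespan

variable {n m : ℕ}

theorem mLoad_le_makespan (p : Fin n → ℝ) (σ : Fin n → Fin m) (i : Fin m) :
    mLoad p σ i ≤ makespan p σ :=
  le_ciSup (Set.finite_range _).bddAbove i

theorem makespan_mono {p q : Fin n → ℝ} (h : ∀ j, p j ≤ q j) (σ : Fin n → Fin m) :
    makespan p σ ≤ makespan q σ :=
  ciSup_mono (Set.finite_range _).bddAbove fun _ => sum_le_sum fun j _ => h j

theorem optMakespan_mono {p q : Fin n → ℝ} (h : ∀ j, p j ≤ q j) :
    optMakespan m p ≤ optMakespan m q :=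
  ciInf_mono (Set.finite_range _).bddBelow fun σ => makespan_mono h σ

theorem optMakespan_nonneg {p : Fin n → ℝ} (hp : ∀ j, 0 ≤ p j) : 0 ≤ optMakespan m p :=
  Real.iInf_nonneg fun _ => Real.iSup_nonneg fun _ => sum_nonneg fun j _ => hp j

theorem le_optMakespan [Nonempty (Fin n → Fin m)] {p : Fin n → ℝ} (hp : ∀ j, 0 ≤ p j)
    (j : Fin n) : p j ≤ optMakespan m p :=
  le_ciInf fun σ => (single_le_sum (fun j _ => hp j) (by simp)).trans
    (mLoad_le_makespan p σ (σ j))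

end Makespan

theorem stmt13_general (n m : ℕ) (p : Fin n → ℝ) (hp : ∀ j, 0 < p j)
    (σ : Fin n → Fin m) (hσ : makespan p σ = optMakespan m p)
    (f : ℝ) (hf : 1 ≤ f) (k : ℕ)
    (phat : Fin n → ℝ) (h1 : ∀ j, p j ≤ phat j)
    (hunstable : (Finset.univ.filter (fun j => f * p j < phat j)).card ≤ k) :
    makespan phat σ ≤ (f + (k : ℝ)) * optMakespan m phat := by
  have : Nonempty (Fin n → Fin m) := ⟨σ⟩
  have hphat : ∀ j, 0 ≤ phat j := fun j => (hp j).le.trans (h1 j)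
  have hf0 : 0 ≤ f := zero_le_one.trans hf
  have hopt := optMakespan_nonneg (m := m) hphat
  refine Real.iSup_le (fun i => ?_) (by positivity)
  have hunstable_i : #((univ.filter fun j => σ j = i).filter fun j => f * p j < phat j) ≤ k :=
    (card_le_card (filter_subset_filter _ (filter_subset _ _))).trans hunstable
  have hload_i : mLoad p σ i ≤ optMakespan m phat :=
    (mLoad_le_makespan p σ i).trans (hσ.trans_le (optMakespan_mono h1))
  calc mLoad phat σ i
      ≤ f * mLoad p σ i
          + #((univ.filter fun j => σ j = i).filter fun j => f * p j < phat j)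
            * optMakespan m phat :=
        sum_le_mul_sum_add_card_filter_lt_mul hf0 (fun j _ => (hp j).le)
          fun j _ => le_optMakespan hphat j
    _ ≤ f * optMakespan m phat + k * optMakespan m phat := by gcongr
    _ = (f + k) * optMakespan m phat := by ring

/-- Type-2 (augmentations only) recovery guarantee: keeping a minimum-makespan
assignment after augmentations with at most `k` unstable jobs (augmented by a factor
exceeding `f`) yields makespan at most `(f + k)·C*_max(m, p̂)`. -/
theorem stmt13 (n m : ℕ) (hm : 0 < m) (p : Fin n → ℝ) (hp : ∀ j, 0 < p j)
    (σ : Fin n → Fin m) (hσ : makespan p σ = optMakespan m p)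
    (f : ℝ) (hf : 1 ≤ f) (k : ℕ)
    (phat : Fin n → ℝ) (h1 : ∀ j, p j ≤ phat j)
    (hunstable : (Finset.univ.filter (fun j => f * p j < phat j)).card ≤ k) :
    makespan phat σ ≤ (f + (k : ℝ)) * optMakespan m phat :=
  stmt13_general n m p hp σ hσ f hf k phat h1 hunstable
end
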